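/- Let ρ be a non-atomic Borel probability measure on [0,∞) with finite first moment, let ζ ∈ (0,1), let W : [0,1] → [0,∞) be bounded, continuous, and satisfy W(t) = 0 for all t ≥ ζ, and let R ≥ 0. Then the one-sided derivative at t = 0 of t ↦ Φ_W((1−t)ρ + t δ_R) exists, equals ∫_0^∞ W(F_ρ(r)) ( F_ρ(r) − 1_{[R,∞)}(r) ) dr, and is at most IF_max(ρ, W) = ∫_0^{F_ρ^{-1}(ζ)} W(F_ρ(r)) F_ρ(r) dr. In particular the influence function of Φ_W at ρ is bounded above uniformly in R by IF_max(ρ, W). -/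

import Mathlib

open MeasureTheory Set

/-- The cumulative distribution function `F_ρ(r) = ρ([0,r])`. -/
noncomputable def cdf (ρ : Measure ℝ) (r : ℝ) : ℝ := (ρ (Iic r)).toReal

/-- The quantile function `F_ρ⁻¹(ζ) = inf { r ≥ 0 : F_ρ(r) ≥ ζ }`. -/
noncomputable def quant (ρ : Measure ℝ) (ζ : ℝ) : ℝ := sInf {r : ℝ | 0 ≤ r ∧ ζ ≤ cdf ρ r}

/-- The robust functional `Φ_W(ρ) = ∫ r W(F_ρ(r)) dρ(r)`. -/
noncomputable def PhiW (W : ℝ → ℝ) (ρ : Measure ℝ) : ℝ := ∫ r, r * W (cdf ρ r) ∂ρ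

/-- The mixture `(1 - t) ρ + t δ_R`. -/
noncomputable def mix (ρ : Measure ℝ) (R t : ℝ) : Measure ℝ :=
  ENNReal.ofReal (1 - t) • ρ + ENNReal.ofReal t • Measure.dirac R

open Filter
open scoped Topology

/-!
Write `F = F_ρ`, `a = F(R)`, and let `w` be a continuous extension of `W` to `ℝ`. The mixture
`(1-t)ρ + tδ_R` has distribution function `F_t = (1-t)F + t·1_{[R,∞)}`, and since `W` vanishes
above `ζ`, everything happens on a bounded interval `(0, M]`. Writing `r = ∫₀^M 1_{x<r} dx` and
transporting `ρ` by `F` to the uniform law on `(0,1]` (this is where `ρ` must have no atoms) gives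
  `Φ_W((1-t)ρ + tδ_R) = ∫₀^M ∫_{F_t(x)}^1 w + R·(t·w((1-t)a + t) - ∫_{(1-t)a}^{(1-t)a+t} w)`,
whose second term, caused by the atom at `R`, has derivative `0` at `t = 0`. Differentiating the
first term under the integral sign gives `∫ W(F)(F - 1_{[R,∞)})`, which is at most `∫ W(F) F`; the
integrand vanishes beyond `F⁻¹(ζ)`.
-/

lemma cdf_nonneg {ρ : Measure ℝ} (r : ℝ) : 0 ≤ cdf ρ r := ENNReal.toReal_nonneg

section Cdf

variable {ρ : Measure ℝ} [IsProbabilityMeasure ρ]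

lemma cdf_eq_probabilityTheory_cdf : cdf ρ = ProbabilityTheory.cdf ρ := by
  ext r
  rw [ProbabilityTheory.cdf_eq_real]
  rfl

lemma cdf_le_one (r : ℝ) : cdf ρ r ≤ 1 := by
  rw [cdf_eq_probabilityTheory_cdf]
  exact ProbabilityTheory.cdf_le_one ρ r

lemma monotone_cdf : Monotone (cdf ρ) := by
  rw [cdf_eq_probabilityTheory_cdf]
  exact ProbabilityTheory.monotone_cdf ρ

@[fun_prop]
lemma measurable_cdf : Measurable (cdf ρ) := monotone_cdf.measurable

variable (ρ) in
lemma tendsto_cdf_atBot : Tendsto (cdf ρ) atBot (𝓝 0) := by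
  rw [cdf_eq_probabilityTheory_cdf]
  exact ProbabilityTheory.tendsto_cdf_atBot ρ

variable (ρ) in
lemma tendsto_cdf_atTop : Tendsto (cdf ρ) atTop (𝓝 1) := by
  rw [cdf_eq_probabilityTheory_cdf]
  exact ProbabilityTheory.tendsto_cdf_atTop ρ

lemma ofReal_cdf (r : ℝ) : ENNReal.ofReal (cdf ρ r) = ρ (Iic r) := by
  rw [cdf_eq_probabilityTheory_cdf]
  exact ProbabilityTheory.ofReal_cdf ρ r

variable [NullSingletonClass ρ]

lemma continuous_cdf : Continuous (cdf ρ) := by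
  rw [continuous_iff_continuousAt]
  intro x
  rw [cdf_eq_probabilityTheory_cdf,
    (ProbabilityTheory.cdf ρ).mono.continuousAt_iff_leftLim_eq_rightLim,
    StieltjesFunction.rightLim_eq]
  have hjump := (ProbabilityTheory.cdf ρ).measure_singleton x
  rw [ProbabilityTheory.measure_cdf, measure_singleton, eq_comm, ENNReal.ofReal_eq_zero] at hjump
  exact le_antisymm ((ProbabilityTheory.cdf ρ).mono.leftLim_le le_rfl) (by linarith)

lemma measure_cdf_preimage_Iic_cdf (x : ℝ) : ρ (cdf ρ ⁻¹' Iic (cdf ρ x)) = ρ (Iic x) := by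
  set S := cdf ρ ⁻¹' Iic (cdf ρ x)
  have hxS : x ∈ S := le_refl (cdf ρ x)
  have hlower : ∀ ⦃y z⦄, y ≤ z → z ∈ S → y ∈ S := fun y z hyz hz => (monotone_cdf hyz).trans hz
  by_cases hbdd : BddAbove S
  · have hsup : sSup S ∈ S := (isClosed_Iic.preimage continuous_cdf).csSup_mem ⟨x, hxS⟩ hbdd
    have hS : S = Iic (sSup S) :=
      Subset.antisymm (fun y hy => le_csSup hbdd hy) (fun y hy => hlower hy hsup)
    rw [hS, ← ofReal_cdf, ← ofReal_cdf]
    exact congrArg _ (le_antisymm hsup (monotone_cdf (le_csSup hbdd hxS)))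
  · have hS : S = univ := by
      refine eq_univ_of_forall fun y => ?_
      obtain ⟨z, hz, hyz⟩ := not_bddAbove_iff.mp hbdd y
      exact hlower hyz.le hz
    have hone : cdf ρ x = 1 := by
      refine le_antisymm (cdf_le_one x) (le_of_tendsto (tendsto_cdf_atTop ρ) ?_)
      exact Eventually.of_forall fun y => (hS ▸ mem_univ y : y ∈ S)
    rw [hS, measure_univ, ← ofReal_cdf, hone, ENNReal.ofReal_one]

end Cdf

section Atomless

variable {ρ : Measure ℝ} [IsProbabilityMeasure ρ] [NullSingletonClass ρ]

lemma measure_cdf_preimage_Iic {s : ℝ} (hs : s < 1) :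
    ρ (cdf ρ ⁻¹' Iic s) = ENNReal.ofReal s := by
  by_cases hne : ∃ y, cdf ρ y ≤ s
  · obtain ⟨y, hy⟩ := hne
    obtain ⟨z, hz⟩ := ((tendsto_cdf_atTop ρ).eventually (eventually_ge_nhds hs)).exists (α := ℝ)
    obtain ⟨x, rfl⟩ := intermediate_value_univ y z continuous_cdf ⟨hy, hz⟩
    rw [measure_cdf_preimage_Iic_cdf, ofReal_cdf]
  · push Not at hne
    have hs0 : s ≤ 0 := by
      by_contra! hs0
      obtain ⟨y, hy⟩ := ((tendsto_cdf_atBot ρ).eventually (eventually_lt_nhds hs0)).exists (α := ℝ)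
      exact (hne y).not_ge hy.le
    rw [ENNReal.ofReal_of_nonpos hs0, ← measure_empty (μ := ρ)]
    exact congrArg ρ (eq_empty_of_forall_notMem fun y hy => (hne y).not_ge hy)

lemma map_cdf : ρ.map (cdf ρ) = volume.restrict (Ioc 0 1) := by
  refine Measure.ext_of_Iic _ _ fun s => ?_
  rw [Measure.map_apply measurable_cdf measurableSet_Iic, Measure.restrict_apply measurableSet_Iic]
  rcases lt_or_ge s 1 with hs | hs
  · rw [measure_cdf_preimage_Iic hs, Iic_inter_Ioc_of_le hs.le, Real.volume_Ioc, sub_zero]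
  · rw [preimage_eq_univ_iff.mpr fun _ ⟨r, hr⟩ => hr ▸ (cdf_le_one r).trans hs, measure_univ,
      inter_eq_right.mpr fun u hu => hu.2.trans hs, Real.volume_Ioc, sub_zero, ENNReal.ofReal_one]

lemma Ioi_ae_eq_cdf_preimage_Ioi (x : ℝ) : Ioi x =ᵐ[ρ] cdf ρ ⁻¹' Ioi (cdf ρ x) := by
  have hle : cdf ρ ⁻¹' Iic (cdf ρ x) =ᵐ[ρ] Iic x :=
    (ae_eq_of_subset_of_measure_ge (fun y hy => monotone_cdf hy)
      (measure_cdf_preimage_Iic_cdf x).le measurableSet_Iic.nullMeasurableSet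
      (measure_ne_top ρ _)).symm
  rw [← compl_Iic, ← compl_Iic, preimage_compl]
  exact hle.compl.symm

lemma indicator_Ici_ae_eq_comp_cdf (R : ℝ) :
    (Ici R).indicator (fun _ => (1 : ℝ)) =ᵐ[ρ]
      fun r => (Ioi (cdf ρ R)).indicator (fun _ => 1) (cdf ρ r) :=
  indicator_ae_eq_of_ae_eq_set (Ioi_ae_eq_Ici.symm.trans (Ioi_ae_eq_cdf_preimage_Ioi R))

lemma setIntegral_Ioi_comp_cdf {φ : ℝ → ℝ} (hφ : Measurable φ) (x : ℝ) :
    ∫ r in Ioi x, φ (cdf ρ r) ∂ρ = ∫ u in Ioc (cdf ρ x) 1, φ u := by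
  rw [setIntegral_congr_set (Ioi_ae_eq_cdf_preimage_Ioi x),
    ← setIntegral_map measurableSet_Ioi hφ.aestronglyMeasurable measurable_cdf.aemeasurable,
    map_cdf, Measure.restrict_restrict measurableSet_Ioi, inter_comm, Ioc_inter_Ioi,
    max_eq_right (cdf_nonneg x)]

end Atomless

lemma Iio_inter_Ioc_of_le {a b c : ℝ} (h : c ≤ b) : Iio c ∩ Ioc a b = Ioo a c := by
  ext y
  simp only [mem_inter_iff, mem_Ioc, mem_Iio, mem_Ioo]
  exact ⟨fun hy => ⟨hy.2.1, hy.1⟩, fun hy => ⟨hy.2, hy.1, hy.2.le.trans h⟩⟩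

lemma sub_mul_add_mul_mem_Icc {p q t : ℝ} (hp : p ∈ Icc (0 : ℝ) 1) (hq : q ∈ Icc (0 : ℝ) 1)
    (ht : t ∈ Icc (0 : ℝ) 1) : (1 - t) * p + t * q ∈ Icc (0 : ℝ) 1 :=
  convex_Icc (0 : ℝ) 1 hp hq (sub_nonneg.2 ht.2) ht.1 (sub_add_cancel 1 t)

lemma indicator_one_mem_Icc (s : Set ℝ) (x : ℝ) :
    s.indicator (fun _ => (1 : ℝ)) x ∈ Icc (0 : ℝ) 1 := by
  by_cases h : x ∈ s <;> simp [h]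

lemma integral_mul_eq_integral_setIntegral_Ioi {ρ : Measure ℝ} [IsFiniteMeasure ρ]
    (hsupp : ρ (Iio 0) = 0) {g : ℝ → ℝ} (hg : Measurable g) (hgi : Integrable g ρ) {M : ℝ}
    (hgM : ∀ r, M < r → g r = 0) :
    ∫ r, r * g r ∂ρ = ∫ x in Ioc 0 M, ∫ r in Ioi x, g r ∂ρ := by
  have hslice : ∀ r x, (Ioi x).indicator g r = (Iio r).indicator (fun _ => g r) x := fun r x => by
    by_cases h : x < r <;> simp [indicator, h]
  have hlayer : ∀ᵐ r ∂ρ, r * g r = ∫ x in Ioc 0 M, (Ioi x).indicator g r := by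
    filter_upwards [measure_eq_zero_iff_ae_notMem.mp hsupp] with r hr
    simp_rw [hslice r, integral_indicator_const _ measurableSet_Iio, smul_eq_mul,
      Measure.real, Measure.restrict_apply measurableSet_Iio]
    rcases le_or_gt r M with hrM | hrM
    · rw [Iio_inter_Ioc_of_le hrM, Real.volume_Ioo, ENNReal.toReal_ofReal (by simpa using hr),
        sub_zero]
    · simp [hgM r hrM]
  have hint : Integrable (Function.uncurry fun r x => (Ioi x).indicator g r)
      (ρ.prod (volume.restrict (Ioc 0 M))) := by
    refine (hgi.norm.comp_fst _).mono' ?_ (Eventually.of_forall fun p => ?_)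
    · exact (Measurable.ite (measurableSet_lt measurable_snd measurable_fst)
        (hg.comp measurable_fst) measurable_const).aestronglyMeasurable
    · exact norm_indicator_le_norm_self g p.1
  rw [integral_congr_ae hlayer, integral_integral_swap hint]
  simp_rw [integral_indicator measurableSet_Ioi]

lemma integrable_mul_of_forall_gt_eq_zero {ρ : Measure ℝ} [IsFiniteMeasure ρ]
    (hsupp : ρ (Iio 0) = 0) {g : ℝ → ℝ} (hg : Measurable g) {B : ℝ} (hgB : ∀ r, |g r| ≤ B)
    {M : ℝ} (hgM : ∀ r, M < r → g r = 0) : Integrable (fun r => r * g r) ρ := by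
  refine Integrable.of_bound (measurable_id.mul hg).aestronglyMeasurable (|M| * B) ?_
  filter_upwards [measure_eq_zero_iff_ae_notMem.mp hsupp] with r hr
  have hr0 : 0 ≤ r := not_lt.1 hr
  rw [norm_mul, Real.norm_eq_abs, Real.norm_eq_abs]
  rcases le_or_gt r M with hrM | hrM
  · exact mul_le_mul (abs_le_abs_of_nonneg hr0 hrM) (hgB r) (abs_nonneg _) (abs_nonneg _)
  · rw [hgM r hrM, abs_zero, mul_zero]
    exact mul_nonneg (abs_nonneg M) ((abs_nonneg _).trans (hgB r))

lemma setIntegral_Ioi_eq_setIntegral_Ioc {μ : Measure ℝ} {f : ℝ → ℝ} {a L : ℝ}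
    (hf : ∀ x, L < x → f x = 0) : ∫ x in Ioi a, f x ∂μ = ∫ x in Ioc a L, f x ∂μ :=
  setIntegral_eq_of_subset_of_forall_sdiff_eq_zero measurableSet_Ioi Ioc_subset_Ioi_self
    fun x hx => hf x (not_le.1 fun hxL => hx.2 ⟨hx.1, hxL⟩)

section Mix

variable {ρ : Measure ℝ} {R t : ℝ}

lemma isProbabilityMeasure_mix [IsProbabilityMeasure ρ] (ht : t ∈ Icc 0 1) :
    IsProbabilityMeasure (mix ρ R t) := by
  constructor
  simp only [mix, Measure.add_apply, Measure.smul_apply, measure_univ, smul_eq_mul, mul_one]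
  rw [← ENNReal.ofReal_add (by linarith [ht.2]) ht.1, sub_add_cancel, ENNReal.ofReal_one]

lemma cdf_mix [IsFiniteMeasure ρ] (ht : t ∈ Icc 0 1) (r : ℝ) :
    cdf (mix ρ R t) r = (1 - t) * cdf ρ r + t * (Ici R).indicator (fun _ => (1 : ℝ)) r := by
  have hdirac : (Measure.dirac R (Iic r)).toReal = (Ici R).indicator (fun _ => (1 : ℝ)) r := by
    by_cases h : R ≤ r <;> simp [indicator, h, Measure.dirac_apply' R measurableSet_Iic]
  simp only [cdf, mix, Measure.add_apply, Measure.smul_apply, smul_eq_mul]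
  rw [ENNReal.toReal_add (ENNReal.mul_ne_top ENNReal.ofReal_ne_top (measure_ne_top ρ _))
      (ENNReal.mul_ne_top ENNReal.ofReal_ne_top (measure_ne_top _ _)),
    ENNReal.toReal_mul, ENNReal.toReal_mul, ENNReal.toReal_ofReal (by linarith [ht.2]),
    ENNReal.toReal_ofReal ht.1, hdirac]

lemma integral_mix {g : ℝ → ℝ} (hg : Integrable g ρ) (ht : t ∈ Icc 0 1) :
    ∫ r, g r ∂(mix ρ R t) = (1 - t) * ∫ r, g r ∂ρ + t * g R := by
  have hdirac : Integrable g (Measure.dirac R) :=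
    (integrable_const (g R)).congr (ae_eq_dirac g).symm
  rw [mix, integral_add_measure (hg.smul_measure ENNReal.ofReal_ne_top)
      (hdirac.smul_measure ENNReal.ofReal_ne_top), integral_smul_measure, integral_smul_measure,
    integral_dirac, ENNReal.toReal_ofReal (by linarith [ht.2]), ENNReal.toReal_ofReal ht.1,
    smul_eq_mul, smul_eq_mul]

end Mix

lemma PhiW_congr {μ : Measure ℝ} [IsProbabilityMeasure μ] {W w : ℝ → ℝ} (h : EqOn W w (Icc 0 1)) :
    PhiW W μ = PhiW w μ := by
  simp only [PhiW, h ⟨cdf_nonneg _, cdf_le_one _⟩]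

lemma PhiW_mix {ρ : Measure ℝ} [IsProbabilityMeasure ρ] {w : ℝ → ℝ} {R t : ℝ}
    (ht : t ∈ Icc (0 : ℝ) 1)
    (hint : Integrable
      (fun r => r * w ((1 - t) * cdf ρ r + t * (Ici R).indicator (fun _ => 1) r)) ρ) :
    PhiW w (mix ρ R t) =
      (1 - t) * (∫ r, r * w ((1 - t) * cdf ρ r + t * (Ici R).indicator (fun _ => 1) r) ∂ρ) +
        t * (R * w ((1 - t) * cdf ρ R + t)) := by
  simp only [PhiW, cdf_mix ht]
  rw [integral_mix hint ht]
  simp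

section Calculus

variable {w : ℝ → ℝ}

lemma Continuous.hasDerivAt_intervalIntegral (hw : Continuous w) {u v : ℝ → ℝ} {u' v' t : ℝ}
    (hu : HasDerivAt u u' t) (hv : HasDerivAt v v' t) :
    HasDerivAt (fun s => ∫ x in u s..v s, w x) (w (v t) * v' - w (u t) * u') t := by
  have hprim : ∀ y, HasDerivAt (fun z => ∫ x in 0..z, w x) (w y) y := fun y =>
    (hw.integral_hasStrictDerivAt 0 y).hasDerivAt
  have hsub : (fun s => ∫ x in u s..v s, w x) =
      fun s => (∫ x in 0..v s, w x) - ∫ x in 0..u s, w x := by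
    ext s
    rw [intervalIntegral.integral_interval_sub_left (hw.intervalIntegrable _ _)
      (hw.intervalIntegrable _ _)]
  rw [hsub]
  exact ((hprim (v t)).comp t hv).sub ((hprim (u t)).comp t hu)

lemma Continuous.continuous_intervalIntegral_lower (hw : Continuous w) (b : ℝ) :
    Continuous fun y => ∫ u in y..b, w u :=
  continuous_iff_continuousAt.2 fun y =>
    (hw.hasDerivAt_intervalIntegral (hasDerivAt_id y) (hasDerivAt_const y b)).continuousAt

lemma norm_intervalIntegral_one_le {B : ℝ} (hwB : ∀ u, |w u| ≤ B) {p : ℝ}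
    (hp : p ∈ Icc (0 : ℝ) 1) : ‖∫ u in p..1, w u‖ ≤ B := by
  refine (intervalIntegral.norm_integral_le_of_norm_le_const fun u _ => hwB u).trans ?_
  have : |1 - p| ≤ 1 := abs_le.2 ⟨by linarith [hp.2], by linarith [hp.1]⟩
  nlinarith [abs_nonneg (w 0), hwB 0]

lemma norm_mul_sub_le {B : ℝ} (hwB : ∀ u, |w u| ≤ B) (u : ℝ) {p q : ℝ}
    (hp : p ∈ Icc (0 : ℝ) 1) (hq : q ∈ Icc (0 : ℝ) 1) : ‖w u * (p - q)‖ ≤ B := by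
  rw [norm_mul, Real.norm_eq_abs, Real.norm_eq_abs]
  have hpq : |p - q| ≤ 1 := abs_sub_le_iff.2 ⟨by linarith [hp.2, hq.1], by linarith [hp.1, hq.2]⟩
  nlinarith [hwB u, abs_nonneg (w u), abs_nonneg (p - q)]

lemma hasDerivAt_id_mul_of_continuousAt {k : ℝ → ℝ} (hk : ContinuousAt k 0) :
    HasDerivAt (fun t => t * k t) (k 0) 0 := by
  rw [hasDerivAt_iff_tendsto_slope]
  refine (hk.tendsto.mono_left nhdsWithin_le_nhds).congr' ?_
  filter_upwards [self_mem_nhdsWithin] with t ht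
  rw [slope_def_field, zero_mul, sub_zero, sub_zero, mul_div_cancel_left₀ _ ht]

/-- The correction due to the atom of `(1-t)ρ + tδ_R` at `R`, where `a = F_ρ(R)`. -/
lemma hasDerivAt_atom_correction (hw : Continuous w) (a : ℝ) :
    HasDerivAt (fun t => t * w ((1 - t) * a + t) - ∫ u in (1 - t) * a..(1 - t) * a + t, w u)
      0 0 := by
  have hlow : HasDerivAt (fun t : ℝ => (1 - t) * a) (-a) 0 := by
    simpa using ((hasDerivAt_id (0 : ℝ)).const_sub 1).mul_const a
  have hup : HasDerivAt (fun t : ℝ => (1 - t) * a + t) (-a + 1) 0 := hlow.add (hasDerivAt_id 0)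
  have hmul := hasDerivAt_id_mul_of_continuousAt (k := fun t => w ((1 - t) * a + t))
    (by fun_prop)
  refine (hmul.sub (hw.hasDerivAt_intervalIntegral hlow hup)).congr_deriv ?_
  norm_num
  ring

end Calculus

lemma hasDerivAt_integral_intervalIntegral_interpolate {α : Type*} [MeasurableSpace α]
    {μ : Measure α} [IsFiniteMeasure μ] {w : ℝ → ℝ} (hw : Continuous w) {B : ℝ}
    (hwB : ∀ u, |w u| ≤ B) {f g : α → ℝ} (hf : Measurable f) (hg : Measurable g)
    (hf01 : ∀ a, f a ∈ Icc 0 1) (hg01 : ∀ a, g a ∈ Icc 0 1) :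
    HasDerivAt (fun t => ∫ a, (∫ u in (1 - t) * f a + t * g a..1, w u) ∂μ)
      (∫ a, w (f a) * (f a - g a) ∂μ) 0 := by
  have hpath : ∀ a t, HasDerivAt (fun s => (1 - s) * f a + s * g a) (g a - f a) t := fun a t =>
    ((((hasDerivAt_id t).const_sub 1).mul_const (f a)).fun_add
      ((hasDerivAt_id t).mul_const (g a))).congr_deriv (by ring)
  have hderiv : ∀ a t, HasDerivAt (fun s => ∫ u in (1 - s) * f a + s * g a..1, w u)
      (w ((1 - t) * f a + t * g a) * (f a - g a)) t := fun a t =>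
    (hw.hasDerivAt_intervalIntegral (hpath a t) (hasDerivAt_const t 1)).congr_deriv (by ring)
  have hmeas : ∀ t, Measurable fun a => ∫ u in (1 - t) * f a + t * g a..1, w u := fun t =>
    (hw.continuous_intervalIntegral_lower 1).measurable.comp ((hf.const_mul _).add (hg.const_mul _))
  have hint : Integrable (fun a => ∫ u in (1 - 0) * f a + 0 * g a..1, w u) μ := by
    refine Integrable.of_bound (hmeas 0).aestronglyMeasurable B (Eventually.of_forall fun a => ?_)
    simpa using norm_intervalIntegral_one_le hwB (hf01 a)
  have key := (hasDerivAt_integral_of_dominated_loc_of_deriv_le (bound := fun _ => B) univ_mem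
    (Eventually.of_forall fun t => (hmeas t).aestronglyMeasurable) hint
    ((hw.measurable.comp ((hf.const_mul _).add (hg.const_mul _))).mul
      (hf.sub hg)).aestronglyMeasurable
    (Eventually.of_forall fun a t _ => norm_mul_sub_le hwB _ (hf01 a) (hg01 a)) (integrable_const B)
    (Eventually.of_forall fun a t _ => hderiv a t)).2
  simpa using key

/-- Under `u = F_ρ(r)`, the distribution function `(1-t)F_ρ + t·1_{[R,∞)}` of the mixture becomes
`(1-t)u + t·1_{u > a}` with `a = F_ρ(R)`. -/
lemma mul_setIntegral_Ioc_comp_jump {w : ℝ → ℝ} (hw : Continuous w) {a b : ℝ} (ha : a ≤ 1)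
    (hb : b ≤ 1) (t : ℝ) :
    (1 - t) * ∫ u in Ioc b 1, w ((1 - t) * u + t * (Ioi a).indicator (fun _ => 1) u) =
      (∫ u in (1 - t) * b..(1 - t) * max a b, w u) + ∫ u in (1 - t) * max a b + t..1, w u := by
  have hbelow : EqOn (fun u => w ((1 - t) * u + t * (Ioi a).indicator (fun _ => 1) u))
      (fun u => w ((1 - t) * u)) (Ioc b (max a b)) := fun u hu => by
    have hua : u ≤ a := by
      by_contra! h
      exact (max_lt h hu.1).not_ge hu.2
    simp [indicator_of_notMem (show u ∉ Ioi a from not_lt.2 hua)]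
  have habove : EqOn (fun u => w ((1 - t) * u + t * (Ioi a).indicator (fun _ => 1) u))
      (fun u => w ((1 - t) * u + t)) (Ioc (max a b) 1) := fun u hu => by
    simp [indicator_of_mem (show u ∈ Ioi a from (le_max_left a b).trans_lt hu.1)]
  have hcont : ∀ c, Continuous fun u => w ((1 - t) * u + c) := fun c => by fun_prop
  rw [← Ioc_union_Ioc_eq_Ioc (le_max_right a b) (max_le ha hb),
    setIntegral_union (Ioc_disjoint_Ioc_of_le le_rfl) measurableSet_Ioc
      (((hcont 0).integrableOn_Ioc).congr_fun (by simpa using hbelow.symm) measurableSet_Ioc)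
      (((hcont t).integrableOn_Ioc).congr_fun habove.symm measurableSet_Ioc),
    setIntegral_congr_fun measurableSet_Ioc hbelow, setIntegral_congr_fun measurableSet_Ioc habove,
    ← intervalIntegral.integral_of_le (le_max_right a b),
    ← intervalIntegral.integral_of_le (max_le ha hb), mul_add,
    intervalIntegral.mul_integral_comp_mul_left, intervalIntegral.mul_integral_comp_mul_add,
    mul_one, sub_add_cancel]

section KeyIdentity

variable {ρ : Measure ℝ} [IsProbabilityMeasure ρ] [NullSingletonClass ρ] {w : ℝ → ℝ} {R : ℝ}

lemma mul_setIntegral_Ioi_comp_cdf_mix (hw : Continuous w) (x t : ℝ) :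
    (1 - t) * ∫ r in Ioi x, w ((1 - t) * cdf ρ r + t * (Ici R).indicator (fun _ => 1) r) ∂ρ =
      (∫ u in (1 - t) * cdf ρ x + t * (Ici R).indicator (fun _ => 1) x..1, w u) -
        (Iio R).indicator (fun _ => 1) x *
          ∫ u in (1 - t) * cdf ρ R..(1 - t) * cdf ρ R + t, w u := by
  have hφ : Measurable fun u => w ((1 - t) * u + t * (Ioi (cdf ρ R)).indicator (fun _ => 1) u) := by
    fun_prop (disch := measurability)
  rw [setIntegral_congr_ae measurableSet_Ioi
      ((indicator_Ici_ae_eq_comp_cdf R).mono fun r hr _ => by rw [hr]),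
    setIntegral_Ioi_comp_cdf hφ, mul_setIntegral_Ioc_comp_jump hw (cdf_le_one R) (cdf_le_one x)]
  rcases le_or_gt R x with hRx | hxR
  · simp [max_eq_right (monotone_cdf hRx), hRx]
  · simp [max_eq_left (monotone_cdf hxR.le), hxR, hxR.not_ge]
    have hii : ∀ p q, IntervalIntegrable w volume p q := fun _ _ => hw.intervalIntegrable _ _
    have h₁ := intervalIntegral.integral_add_adjacent_intervals
      (hii ((1 - t) * cdf ρ x) ((1 - t) * cdf ρ R)) (hii _ 1)
    have h₂ := intervalIntegral.integral_add_adjacent_intervals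
      (hii ((1 - t) * cdf ρ R) ((1 - t) * cdf ρ R + t)) (hii _ 1)
    linarith

lemma mul_integral_comp_cdf_mix (hsupp : ρ (Iio 0) = 0) (hw : Continuous w) {B : ℝ}
    (hwB : ∀ u, |w u| ≤ B) (hR : 0 ≤ R) {M : ℝ} (hRM : R ≤ M) {t : ℝ} (ht : t ∈ Icc (0 : ℝ) 1)
    (hvanish : ∀ r, M < r → w ((1 - t) * cdf ρ r + t * (Ici R).indicator (fun _ => 1) r) = 0) :
    (1 - t) * ∫ r, r * w ((1 - t) * cdf ρ r + t * (Ici R).indicator (fun _ => 1) r) ∂ρ =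
      (∫ x in Ioc 0 M, ∫ u in (1 - t) * cdf ρ x + t * (Ici R).indicator (fun _ => 1) x..1, w u) -
        R * ∫ u in (1 - t) * cdf ρ R..(1 - t) * cdf ρ R + t, w u := by
  have hFt : Measurable fun r => (1 - t) * cdf ρ r + t * (Ici R).indicator (fun _ => 1) r := by
    fun_prop (disch := measurability)
  have hgm : Measurable fun r => w ((1 - t) * cdf ρ r + t * (Ici R).indicator (fun _ => 1) r) :=
    hw.measurable.comp hFt
  have hg := Integrable.of_bound (μ := ρ) hgm.aestronglyMeasurable B
    (Eventually.of_forall fun r => hwB _)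
  have hslices : IntegrableOn
      (fun x => ∫ u in (1 - t) * cdf ρ x + t * (Ici R).indicator (fun _ => 1) x..1, w u)
      (Ioc 0 M) :=
    Integrable.of_bound
      ((hw.continuous_intervalIntegral_lower 1).measurable.comp hFt).aestronglyMeasurable B
      (Eventually.of_forall fun x => norm_intervalIntegral_one_le hwB
        (sub_mul_add_mul_mem_Icc ⟨cdf_nonneg x, cdf_le_one x⟩ (indicator_one_mem_Icc _ _) ht))
  have hatom : IntegrableOn (fun x => (Iio R).indicator (fun _ => (1 : ℝ)) x *
      ∫ u in (1 - t) * cdf ρ R..(1 - t) * cdf ρ R + t, w u) (Ioc 0 M) :=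
    ((integrable_const (1 : ℝ)).indicator measurableSet_Iio).mul_const _
  rw [integral_mul_eq_integral_setIntegral_Ioi hsupp hgm hg hvanish,
    ← integral_const_mul, setIntegral_congr_fun measurableSet_Ioc
      fun x _ => mul_setIntegral_Ioi_comp_cdf_mix hw x t,
    integral_sub hslices hatom, integral_mul_const, integral_indicator_const _ measurableSet_Iio,
    smul_eq_mul, mul_one, Measure.real, Measure.restrict_apply measurableSet_Iio,
    Iio_inter_Ioc_of_le hRM, Real.volume_Ioo, ENNReal.toReal_ofReal (by linarith), sub_zero]

end KeyIdentity

section Quantile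

variable {ρ : Measure ℝ} [IsProbabilityMeasure ρ] {ζ : ℝ}

lemma nonempty_quant_set (hζ : ζ < 1) : {r : ℝ | 0 ≤ r ∧ ζ ≤ cdf ρ r}.Nonempty :=
  (((tendsto_cdf_atTop ρ).eventually (eventually_ge_nhds hζ)).and
    (eventually_ge_atTop 0)).exists.imp fun _ h => ⟨h.2, h.1⟩

lemma quant_nonneg (hζ : ζ < 1) : 0 ≤ quant ρ ζ :=
  le_csInf (nonempty_quant_set hζ) fun _ h => h.1

lemma le_cdf_of_quant_lt (hζ : ζ < 1) {r : ℝ} (hr : quant ρ ζ < r) : ζ ≤ cdf ρ r := by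
  obtain ⟨s, hs, hsr⟩ := exists_lt_of_csInf_lt (nonempty_quant_set hζ) hr
  exact hs.2.trans (monotone_cdf hsr.le)

end Quantile

theorem hasDerivWithinAt_PhiW_mix {ρ : Measure ℝ} [IsProbabilityMeasure ρ] [NullSingletonClass ρ]
    (hsupp : ρ (Iio 0) = 0) {w : ℝ → ℝ} (hw : Continuous w) {B : ℝ} (hwB : ∀ u, |w u| ≤ B)
    {ζ : ℝ} (hζ : ζ < 1) (hwζ : ∀ u, ζ ≤ u → w u = 0) {R : ℝ} (hR : 0 ≤ R) :
    HasDerivWithinAt (fun t => PhiW w (mix ρ R t))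
      (∫ r in Ioi 0, w (cdf ρ r) * (cdf ρ r - (Ici R).indicator (fun _ => 1) r)) (Ici 0) 0 := by
  set M := max (quant ρ ζ) R
  have hvanish : ∀ t ∈ Icc (0 : ℝ) 1, ∀ r, M < r →
      w ((1 - t) * cdf ρ r + t * (Ici R).indicator (fun _ => 1) r) = 0 := by
    intro t ht r hr
    have hζr := le_cdf_of_quant_lt hζ ((le_max_left _ _).trans_lt hr)
    rw [indicator_of_mem (mem_Ici.2 ((le_max_right _ _).trans hr.le)), mul_one]
    exact hwζ _ (by nlinarith [ht.1, ht.2])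
  have hPhi : ∀ t ∈ Icc (0 : ℝ) 1, PhiW w (mix ρ R t) =
      (∫ x in Ioc 0 M, ∫ u in (1 - t) * cdf ρ x + t * (Ici R).indicator (fun _ => 1) x..1, w u) +
        R * (t * w ((1 - t) * cdf ρ R + t) -
          ∫ u in (1 - t) * cdf ρ R..(1 - t) * cdf ρ R + t, w u) := by
    intro t ht
    have hint := integrable_mul_of_forall_gt_eq_zero hsupp
      (by fun_prop (disch := measurability)) (fun r => hwB _) (hvanish t ht)
    rw [PhiW_mix ht hint, mul_integral_comp_cdf_mix hsupp hw hwB hR (le_max_right _ _) ht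
      (hvanish t ht)]
    ring
  have hderiv := (hasDerivAt_integral_intervalIntegral_interpolate
    (μ := volume.restrict (Ioc 0 M)) hw hwB (measurable_cdf (ρ := ρ))
    (measurable_const.indicator measurableSet_Ici) (fun r => ⟨cdf_nonneg r, cdf_le_one r⟩)
    (indicator_one_mem_Icc (Ici R))).add ((hasDerivAt_atom_correction hw (cdf ρ R)).const_mul R)
  rw [setIntegral_Ioi_eq_setIntegral_Ioc (L := M) fun x hx => by
    rw [hwζ _ (le_cdf_of_quant_lt hζ ((le_max_left _ _).trans_lt hx)), zero_mul]]
  simpa using hderiv.hasDerivWithinAt.congr_of_eventuallyEq_of_mem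
    (mem_of_superset (Icc_mem_nhdsGE zero_lt_one) hPhi) self_mem_Ici

lemma setIntegral_mul_cdf_sub_indicator_le {ρ : Measure ℝ} [IsProbabilityMeasure ρ] {w : ℝ → ℝ}
    (hw : Continuous w) {B : ℝ} (hwB : ∀ u, |w u| ≤ B) (hwnn : ∀ u ∈ Icc (0 : ℝ) 1, 0 ≤ w u)
    {ζ : ℝ} (hζ : ζ < 1) (hwζ : ∀ u, ζ ≤ u → w u = 0) (R : ℝ) :
    ∫ r in Ioi 0, w (cdf ρ r) * (cdf ρ r - (Ici R).indicator (fun _ => 1) r) ≤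
      ∫ r in 0..quant ρ ζ, w (cdf ρ r) * cdf ρ r := by
  have hF01 : ∀ r, cdf ρ r ∈ Icc (0 : ℝ) 1 := fun r => ⟨cdf_nonneg r, cdf_le_one r⟩
  have hint : ∀ g : ℝ → ℝ, Measurable g → (∀ r, g r ∈ Icc (0 : ℝ) 1) →
      IntegrableOn (fun r => w (cdf ρ r) * (cdf ρ r - g r)) (Ioc 0 (quant ρ ζ)) := fun g hg hg01 =>
    Integrable.of_bound
      ((hw.measurable.comp measurable_cdf).mul (measurable_cdf.sub hg)).aestronglyMeasurable B
      (Eventually.of_forall fun r => norm_mul_sub_le hwB _ (hF01 r) (hg01 r))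
  rw [setIntegral_Ioi_eq_setIntegral_Ioc (L := quant ρ ζ) fun x hx => by
      rw [hwζ _ (le_cdf_of_quant_lt hζ hx), zero_mul],
    intervalIntegral.integral_of_le (quant_nonneg hζ)]
  simpa using setIntegral_mono_on
    (hint _ (measurable_const.indicator measurableSet_Ici) (indicator_one_mem_Icc (Ici R)))
    (hint 0 measurable_const fun _ => ⟨le_rfl, zero_le_one⟩) measurableSet_Ioc fun r _ =>
      mul_le_mul_of_nonneg_left (sub_le_sub_left (indicator_one_mem_Icc _ r).1 _) (hwnn _ (hF01 r))

theorem influence_of_PhiW_bounded_general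
    (ρ : Measure ℝ) [IsProbabilityMeasure ρ] [NullSingletonClass ρ]
    (hsupp : ρ (Iio 0) = 0)
    (ζ : ℝ) (hζ : ζ ∈ Ioo (0 : ℝ) 1)
    (W : ℝ → ℝ) (hWcont : ContinuousOn W (Icc 0 1))
    (hWnn : ∀ t ∈ Icc (0 : ℝ) 1, 0 ≤ W t)
    (hWzero : ∀ t, ζ ≤ t → W t = 0)
    (R : ℝ) (hR : 0 ≤ R) :
    HasDerivWithinAt (fun t : ℝ => PhiW W (mix ρ R t))
        (∫ r in Ioi (0 : ℝ),
          W (cdf ρ r) * (cdf ρ r - indicator (Ici R) (fun _ => (1 : ℝ)) r)) (Ici 0) 0 ∧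
    (∫ r in Ioi (0 : ℝ),
        W (cdf ρ r) * (cdf ρ r - indicator (Ici R) (fun _ => (1 : ℝ)) r)) ≤
      ∫ r in (0 : ℝ)..(quant ρ ζ), W (cdf ρ r) * cdf ρ r := by
  obtain ⟨B, hB⟩ := isCompact_Icc.exists_bound_of_continuousOn hWcont
  set w := IccExtend zero_le_one ((Icc (0 : ℝ) 1).domRestrict W)
  have hw : Continuous w := continuous_IccExtend_iff.2 hWcont.domRestrict
  have hwW : EqOn W w (Icc 0 1) := fun u hu =>
    (IccExtend_of_mem zero_le_one ((Icc (0 : ℝ) 1).domRestrict W) hu).symm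
  have hwB : ∀ u, |w u| ≤ B := fun u => hB _ (projIcc 0 1 zero_le_one u).2
  have hwζ : ∀ u, ζ ≤ u → w u = 0 := fun u hu =>
    hWzero _ (le_max_of_le_right (le_min hζ.2.le hu))
  have hPhi : ∀ t ∈ Icc (0 : ℝ) 1, PhiW W (mix ρ R t) = PhiW w (mix ρ R t) := fun t ht =>
    have := isProbabilityMeasure_mix (ρ := ρ) (R := R) ht
    PhiW_congr hwW
  simp only [fun r => hwW ⟨cdf_nonneg (ρ := ρ) r, cdf_le_one r⟩]
  exact ⟨(hasDerivWithinAt_PhiW_mix hsupp hw hwB hζ.2 hwζ hR).congr_of_eventuallyEq_of_mem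
      (mem_of_superset (Icc_mem_nhdsGE zero_lt_one) hPhi) self_mem_Ici,
    setIntegral_mul_cdf_sub_indicator_le hw hwB (fun u hu => hwW hu ▸ hWnn u hu) hζ.2 hwζ R⟩

/-- For a non-atomic probability measure `ρ` on `[0,∞)` with finite first moment,
`ζ ∈ (0,1)` and `W : [0,1] → [0,∞)` bounded, continuous, vanishing on `[ζ,1]`, and `R ≥ 0`:
the one-sided derivative at `t = 0` of `t ↦ Φ_W((1-t)ρ + tδ_R)` exists, equals
`∫_0^∞ W(F_ρ(r)) (F_ρ(r) - 1_{[R,∞)}(r)) dr`, and is bounded above by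
`IF_max(ρ,W) = ∫_0^{F_ρ⁻¹(ζ)} W(F_ρ(r)) F_ρ(r) dr`, uniformly in `R`. -/
theorem influence_of_PhiW_bounded
    (ρ : Measure ℝ) [IsProbabilityMeasure ρ] [NullSingletonClass ρ]
    (hsupp : ρ (Iio 0) = 0) (hint : Integrable (fun r : ℝ => r) ρ)
    (ζ : ℝ) (hζ : ζ ∈ Ioo (0 : ℝ) 1)
    (W : ℝ → ℝ) (hWcont : ContinuousOn W (Icc 0 1))
    (hWnn : ∀ t ∈ Icc (0 : ℝ) 1, 0 ≤ W t)
    (B : ℝ) (hWbd : ∀ t ∈ Icc (0 : ℝ) 1, W t ≤ B)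
    (hWzero : ∀ t, ζ ≤ t → W t = 0)
    (R : ℝ) (hR : 0 ≤ R) :
    HasDerivWithinAt (fun t : ℝ => PhiW W (mix ρ R t))
        (∫ r in Ioi (0 : ℝ),
          W (cdf ρ r) * (cdf ρ r - indicator (Ici R) (fun _ => (1 : ℝ)) r)) (Ici 0) 0 ∧
    (∫ r in Ioi (0 : ℝ),
        W (cdf ρ r) * (cdf ρ r - indicator (Ici R) (fun _ => (1 : ℝ)) r)) ≤
      ∫ r in (0 : ℝ)..(quant ρ ζ), W (cdf ρ r) * cdf ρ r :=
  influence_of_PhiW_bounded_general ρ hsupp ζ hζ W hWcont hWnn hWzero R hR
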